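/- arXiv:2311.17838 — 3 statements merged into one kernel-verified Lean document; each statement's English description precedes it below -/
import Mathlib

section
/- Let k ∈ ℝ, ω ∈ ℂ and V₊, V₋ ∈ ℂ \ {0} with μ± = √(k² + ωV±) satisfying Re(μ±) > 0. Define ψ : ℝ → ℂ³ piecewise by ψ(x) = c₋ e^{μ₋ x} (-ik, μ₋, -iV₋) for x < 0 and ψ(x) = c₊ e^{-μ₊ x} (ik, μ₊, iV₊) for x > 0. Then the interface conditions lim_{x→0⁻} ψ₂(x) = lim_{x→0⁺} ψ₂(x) and lim_{x→0⁻} ψ₃(x) = lim_{x→0⁺} ψ₃(x) hold for some (c₋, c₊) ≠ (0,0) if and only if μ₋ V₊ + μ₊ V₋ = 0, in which case c₊ = -(V₋/V₊) c₋. -/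
open Filter Topology

/-- `f` has matching one-sided limits at `0`. -/
def MatchAt0 (f : ℝ → ℂ) : Prop :=
  ∃ l : ℂ, Tendsto f (nhdsWithin 0 (Set.Iio 0)) (nhds l) ∧
    Tendsto f (nhdsWithin 0 (Set.Ioi 0)) (nhds l)

/-- Second component of the candidate eigenfunction for two homogeneous layers. -/
noncomputable def psi2 (μp μm cm cp : ℂ) : ℝ → ℂ := fun x =>
  if x < 0 then cm * Complex.exp (μm * x) * μm else cp * Complex.exp (-μp * x) * μp

/-- Third component of the candidate eigenfunction for two homogeneous layers. -/
noncomputable def psi3 (μp μm Vp Vm cm cp : ℂ) : ℝ → ℂ := fun x =>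
  if x < 0 then cm * Complex.exp (μm * x) * (-Complex.I * Vm)
  else cp * Complex.exp (-μp * x) * (Complex.I * Vp)

lemma tendsto_exp_aux (c μ d : ℂ) :
    Tendsto (fun x : ℝ => c * Complex.exp (μ * x) * d) (nhds 0) (nhds (c * d)) := by
  have hc : Continuous (fun x : ℝ => c * Complex.exp (μ * x) * d) := by continuity
  have := hc.tendsto 0
  simpa using this

lemma matchAt0_iff (a b : ℂ) (f : ℝ → ℂ)
    (hl : Tendsto f (nhdsWithin 0 (Set.Iio 0)) (nhds a))
    (hr : Tendsto f (nhdsWithin 0 (Set.Ioi 0)) (nhds b)) : MatchAt0 f ↔ a = b := by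
  constructor
  · rintro ⟨l, hl', hr'⟩
    have h1 : a = l := tendsto_nhds_unique hl hl'
    have h2 : b = l := tendsto_nhds_unique hr hr'
    rw [h1, h2]
  · intro h
    exact ⟨a, hl, h ▸ hr⟩

lemma left_lim (c μ d : ℂ) (f : ℝ → ℂ) (hf : ∀ x < (0 : ℝ), f x = c * Complex.exp (μ * x) * d) :
    Tendsto f (nhdsWithin 0 (Set.Iio 0)) (nhds (c * d)) := by
  have h := (tendsto_exp_aux c μ d).mono_left (nhdsWithin_le_nhds (s := Set.Iio (0 : ℝ)))
  refine h.congr' ?_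
  filter_upwards [self_mem_nhdsWithin] with x hx
  exact (hf x hx).symm

lemma right_lim (c μ d : ℂ) (f : ℝ → ℂ) (hf : ∀ x > (0 : ℝ), f x = c * Complex.exp (μ * x) * d) :
    Tendsto f (nhdsWithin 0 (Set.Ioi 0)) (nhds (c * d)) := by
  have h := (tendsto_exp_aux c μ d).mono_left (nhdsWithin_le_nhds (s := Set.Ioi (0 : ℝ)))
  refine h.congr' ?_
  filter_upwards [self_mem_nhdsWithin] with x hx
  exact (hf x hx).symm

lemma match2_iff (μp μm cm cp : ℂ) :
    MatchAt0 (psi2 μp μm cm cp) ↔ cm * μm = cp * μp := by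
  apply matchAt0_iff
  · apply left_lim cm μm μm
    intro x hx
    simp [psi2, hx]
  · apply right_lim cp (-μp) μp
    intro x hx
    simp [psi2, not_lt.mpr hx.le]

lemma match3_iff (μp μm Vp Vm cm cp : ℂ) :
    MatchAt0 (psi3 μp μm Vp Vm cm cp) ↔ cm * (-Complex.I * Vm) = cp * (Complex.I * Vp) := by
  apply matchAt0_iff
  · apply left_lim cm μm (-Complex.I * Vm)
    intro x hx
    simp [psi3, hx]
  · apply right_lim cp (-μp) (Complex.I * Vp)
    intro x hx
    simp [psi3, not_lt.mpr hx.le]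

/-- For two homogeneous layers (`V± ≠ 0`, `μ±² = k² + ωV±`, `Re μ± > 0`), the interface
continuity conditions for `ψ₂, ψ₃` at `x = 0` hold for some `(c₋, c₊) ≠ (0,0)` if and only
if the dispersion relation `μ₋ V₊ + μ₊ V₋ = 0` holds; in that case `c₊ = -(V₋/V₊) c₋`. -/
theorem stmt_6 (k : ℝ) (ω Vp Vm μp μm : ℂ) (hVp : Vp ≠ 0) (hVm : Vm ≠ 0)
    (hμp : μp ^ 2 = (k : ℂ) ^ 2 + ω * Vp) (hμm : μm ^ 2 = (k : ℂ) ^ 2 + ω * Vm)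
    (hrp : 0 < μp.re) (hrm : 0 < μm.re) :
    ((∃ cm cp : ℂ, (cm, cp) ≠ (0, 0) ∧ MatchAt0 (psi2 μp μm cm cp) ∧
        MatchAt0 (psi3 μp μm Vp Vm cm cp)) ↔ μm * Vp + μp * Vm = 0) ∧
    (∀ cm cp : ℂ, MatchAt0 (psi2 μp μm cm cp) → MatchAt0 (psi3 μp μm Vp Vm cm cp) →
      cp = -(Vm / Vp) * cm) := by
  have hμp0 : μp ≠ 0 := fun h => by simp [h] at hrp
  have hμm0 : μm ≠ 0 := fun h => by simp [h] at hrm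
  have hI : Complex.I ≠ 0 := Complex.I_ne_zero
  constructor
  · constructor
    · rintro ⟨cm, cp, hne, h2, h3⟩
      rw [match2_iff] at h2
      rw [match3_iff] at h3
      have hcm : cm ≠ 0 := by
        intro h
        apply hne
        have : cp * μp = 0 := by rw [← h2, h]; ring
        have hcp : cp = 0 := by
          rcases mul_eq_zero.mp this with h' | h'
          · exact h'
          · exact absurd h' hμp0
        simp [h, hcp]
      -- from h3 : cm * Vm = -(cp * Vp)
      have hI2 : Complex.I * (cm * Vm) = Complex.I * (-(cp * Vp)) := by
        linear_combination -h3
      have h3' : cm * Vm = -(cp * Vp) := mul_left_cancel₀ hI hI2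
      -- combine: μp * (cm * Vm) = -(cp * μp * Vp) = -(cm * μm * Vp)
      have key : cm * (μm * Vp + μp * Vm) = 0 := by
        linear_combination μp * h3' + Vp * h2
      rcases mul_eq_zero.mp key with h | h
      · exact absurd h hcm
      · exact h
    · intro hdisp
      refine ⟨Vp, -Vm, ?_, ?_, ?_⟩
      · intro h
        exact hVp (congrArg Prod.fst h)
      · rw [match2_iff]
        linear_combination hdisp
      · rw [match3_iff]
        ring
  · intro cm cp h2 h3
    rw [match3_iff] at h3
    have hI2 : Complex.I * (cm * Vm) = Complex.I * (-(cp * Vp)) := by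
      linear_combination -h3
    have h3' : cm * Vm = -(cp * Vp) := mul_left_cancel₀ hI hI2
    have h4 : -(Vm / Vp) * cm = -(cm * Vm) / Vp := by ring
    rw [h4, h3', neg_neg, mul_div_assoc, div_self hVp, mul_one]
end

section
/- Let k ∈ ℝ and suppose all three layer coefficients are positive reals: V₊, V₋, V* > 0, with ω > 0, and set μ± = √(k² + ωV±) > 0, μ* = √(k² + ωV*) > 0 and d > 0. Then the three-layer dispersion relation e^{2μ* d} = ((μ* V₊ - μ₊ V*)(μ* V₋ - μ₋ V*)) / ((μ* V₊ + μ₊ V*)(μ₋ V* + μ* V₋)) cannot hold, because the left-hand side is > 1 while the right-hand side has absolute value < 1. -/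
/-- For conservative three-layer structures (all coefficients positive reals), the
three-layer dispersion relation cannot hold: the left-hand side `e^{2μ* d}` is `> 1`
while the right-hand side has absolute value `< 1`. -/
theorem stmt_7 (k ω Vp Vm Vs d : ℝ) (hVp : 0 < Vp) (hVm : 0 < Vm) (hVs : 0 < Vs)
    (hω : 0 < ω) (hd : 0 < d)
    (μp μm μs : ℝ)
    (hμp : μp = Real.sqrt (k ^ 2 + ω * Vp))
    (hμm : μm = Real.sqrt (k ^ 2 + ω * Vm))
    (hμs : μs = Real.sqrt (k ^ 2 + ω * Vs)) :
    ¬ (Real.exp (2 * μs * d)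
        = ((μs * Vp - μp * Vs) * (μs * Vm - μm * Vs))
          / ((μs * Vp + μp * Vs) * (μm * Vs + μs * Vm))) := by
  intro h
  have hμp0 : 0 < μp := hμp ▸ Real.sqrt_pos.mpr (by positivity)
  have hμm0 : 0 < μm := hμm ▸ Real.sqrt_pos.mpr (by positivity)
  have hμs0 : 0 < μs := hμs ▸ Real.sqrt_pos.mpr (by positivity)
  set a := μs * Vp with ha
  set b := μp * Vs with hb
  set c := μs * Vm with hc
  set e := μm * Vs with he
  have ha0 : 0 < a := by positivity
  have hb0 : 0 < b := by positivity
  have hc0 : 0 < c := by positivity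
  have he0 : 0 < e := by positivity
  have h1 : |a - b| < a + b := abs_sub_lt_iff.mpr ⟨by linarith, by linarith⟩
  have h2 : |c - e| < c + e := abs_sub_lt_iff.mpr ⟨by linarith, by linarith⟩
  have hden : 0 < (a + b) * (e + c) := by positivity
  have habs : |((a - b) * (c - e)) / ((a + b) * (e + c))| < 1 := by
    rw [abs_div, abs_mul, abs_of_pos hden, div_lt_one hden]
    calc |a - b| * |c - e| < (a + b) * (c + e) := by
          apply mul_lt_mul' (le_of_lt h1) h2 (abs_nonneg _) (by linarith)
      _ = (a + b) * (e + c) := by ring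
  have hexp : 1 < Real.exp (2 * μs * d) := by rw [Real.one_lt_exp_iff]; positivity
  rw [h] at hexp
  have := le_abs_self (((a - b) * (c - e)) / ((a + b) * (e + c)))
  linarith
end

section
/- Let V₊, V₋, V*, μ₊, μ₋, μ* ∈ ℂ with μ* V* ≠ 0, and consider the 4×4 matrix T with rows (-μ₋, μ*, μ*, 0), (V₋, -V*, V*, 0), (0, -μ* e^{μ* d}, -μ* e^{-μ* d}, μ₊ e^{-μ₊ d}), (0, V* e^{μ* d}, -V* e^{-μ* d}, V₊ e^{-μ₊ d}). If the coefficients Ã = (e^{μ₊d}/2)(μ*/μ₊)(e^{μ*d}(μ₋/μ* + V₋/V*) + e^{-μ*d}(μ₋/μ* − V₋/V*)), B̃ = (1/2)(μ₋/μ* − V₋/V*), C̃ = (1/2)(μ₋/μ* + V₋/V*) are defined and the dispersion relation e^{μ*d}(μ*V₊ + μ₊V*)(μ₋V* + μ*V₋) + e^{-μ*d}(μ*V₊ − μ₊V*)(μ₋V* − μ*V₋) = 0 holds (with μ₊ ≠ 0), then T (1, C̃, B̃, Ã)ᵀ = 0, i.e. T is singular. -/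
/-!
The first two rows say `C̃ + B̃ = μ₋/μ*` and `C̃ - B̃ = V₋/V*`, which is how `B̃`, `C̃` are chosen;
the third row says `μ₊ e^{-μ₊d} Ã = μ* (e^{μ*d} C̃ + e^{-μ*d} B̃)`, which is how `Ã` is chosen.
Eliminating `Ã` with the third row, `μ₊` times the fourth row becomes
`e^{μ*d} (μ*V₊ + μ₊V*) C̃ + e^{-μ*d} (μ*V₊ - μ₊V*) B̃`, the dispersion relation divided by `2μ*V*`.
-/

theorem Matrix.mulVec_fin_four {α : Type*} [NonUnitalNonAssocSemiring α]
    (a b c d e f g h i j k l m n o p x y z w : α) :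
    Matrix.mulVec !![a, b, c, d; e, f, g, h; i, j, k, l; m, n, o, p] ![x, y, z, w] =
      ![a * x + b * y + c * z + d * w, e * x + f * y + g * z + h * w,
        i * x + j * y + k * z + l * w, m * x + n * y + o * z + p * w] := by
  ext r
  fin_cases r <;> simp [Matrix.mulVec, dotProduct, Fin.sum_univ_four, add_assoc]

open Complex in
/-- The 4×4 interface matrix of the three-layer problem is singular at the dispersion
relation: `T (1, C̃, B̃, Ã)ᵀ = 0`. -/
theorem stmt_8 (d : ℝ) (Vp Vm Vs μp μm μs : ℂ)
    (hμs : μs ≠ 0) (hVs : Vs ≠ 0) (hμp : μp ≠ 0)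
    (hdisp : Complex.exp (μs * d) * (μs * Vp + μp * Vs) * (μm * Vs + μs * Vm)
        + Complex.exp (-μs * d) * (μs * Vp - μp * Vs) * (μm * Vs - μs * Vm) = 0)
    (At Bt Ct : ℂ)
    (hAt : At = (Complex.exp (μp * d) / 2) * (μs / μp) *
        (Complex.exp (μs * d) * (μm / μs + Vm / Vs)
          + Complex.exp (-μs * d) * (μm / μs - Vm / Vs)))
    (hBt : Bt = (1 / 2) * (μm / μs - Vm / Vs))
    (hCt : Ct = (1 / 2) * (μm / μs + Vm / Vs)) :
    (Matrix.mulVec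
      !![-μm, μs, μs, 0;
         Vm, -Vs, Vs, 0;
         0, -μs * Complex.exp (μs * d), -μs * Complex.exp (-μs * d), μp * Complex.exp (-μp * d);
         0, Vs * Complex.exp (μs * d), -Vs * Complex.exp (-μs * d), Vp * Complex.exp (-μp * d)]
      ![1, Ct, Bt, At]) = 0 := by
  set E := exp (μs * d)
  set E' := exp (-μs * d)
  have row_three : μp * exp (-μp * d) * At = μs * (E * Ct + E' * Bt) := by
    rw [hAt, hBt, hCt, neg_mul, exp_neg]
    field_simp
  have hdisp_coeffs : E * (μs * Vp + μp * Vs) * Ct + E' * (μs * Vp - μp * Vs) * Bt = 0 := by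
    rw [hBt, hCt]
    field_simp
    linear_combination hdisp
  simp only [Matrix.mulVec_fin_four, Matrix.cons_eq_zero_iff, Matrix.zero_empty, and_true]
  refine ⟨?_, ?_, by linear_combination row_three, ?_⟩
  · rw [hBt, hCt]; field_simp; ring
  · rw [hBt, hCt]; field_simp; ring
  · apply mul_left_cancel₀ hμp
    linear_combination hdisp_coeffs + Vp * row_three
end
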